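/- arXiv:1906.03579 — 2 statements merged into one kernel-verified Lean document; each statement's English description precedes it below -/
import Mathlib

section
/- Under the full-rank condition (Σ_u α_{u,i} < 1 for every class label i), if the class of functions F satisfies Assumption 1, then the neural network distance between the corrupted distributions is at most that between the original distributions: d_F(P̃, Q̃) ≤ d_F(P, Q). (Theorem 2, lower bound, eq. (7).) -/
open scoped BigOperators
open MeasureTheory

/-- `P` is a probability mass function on `Z`. -/
def IsPMF {Z : Type*} (P : Z → ℝ) : Prop :=
  (∀ z, 0 ≤ P z) ∧ Summable P ∧ ∑' z, P z = 1

/-- The corrupted labeled distribution obtained by passing labels through the channel `C`: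
`P̃(x,ỹ) = ∑ j, P(x,j) · C j ỹ`. -/
noncomputable def corrupt {X : Type*} {k : ℕ} (P : X × Fin k → ℝ)
    (C : Matrix (Fin k) (Fin k) ℝ) : X × Fin k → ℝ :=
  fun z => ∑ j, P (z.1, j) * C j z.2

/-- The confusion matrix `C = diag(𝟙 − Σ_u α_u) + Σ_u α_u e_u^T`, where the uncertain
labels are `m, …, m + mt − 1` (the label `Fin.natAdd m u` for `u : Fin mt`). -/
noncomputable def confusion (m mt : ℕ) (α : Fin mt → Fin (m + mt) → ℝ) :
    Matrix (Fin (m + mt)) (Fin (m + mt)) ℝ :=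
  Matrix.diagonal (fun i => 1 - ∑ u, α u i) +
    ∑ u, Matrix.vecMulVec (α u) (Pi.single (Fin.natAdd m u) 1)

/-- `‖T‖_∞ = max_i ∑_j |T i j|` for a square real matrix. -/
noncomputable def matInfNorm {k : ℕ} (T : Matrix (Fin k) (Fin k) ℝ) : ℝ :=
  ⨆ i, ∑ j, |T i j|

/-- `(T ∘ f)(x, y) = ∑_ỹ T y ỹ · f (x, ỹ)`. -/
def chanOp {X : Type*} {k : ℕ} (T : Matrix (Fin k) (Fin k) ℝ)
    (f : X × Fin k → ℝ) : X × Fin k → ℝ :=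
  fun z => ∑ j, T z.2 j * f (z.1, j)

/-- Assumption 1: `F = F₁ + F₂ + constants`, where `F₁` is invariant under the action of
matrices of unit `∞`-norm, and `F₂` consists of `[0,1]`-scalings of label-independent
functions from a class `F₂'`. -/
def Assumption1 {X : Type*} {k : ℕ} (F : Set (X × Fin k → ℝ)) : Prop :=
  ∃ F1 F2 : Set (X × Fin k → ℝ),
    F = {f | ∃ f1 ∈ F1, ∃ f2 ∈ F2, ∃ c : ℝ, f = f1 + f2 + Function.const _ c} ∧
    (∀ T : Matrix (Fin k) (Fin k) ℝ, matInfNorm T = 1 → ∀ f ∈ F1, chanOp T f ∈ F1) ∧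
    (∃ F2' : Set (X → ℝ),
      F2 = {h | ∃ g ∈ F2', ∃ a : ℝ, 0 ≤ a ∧ a ≤ 1 ∧ h = fun z => a * g z.1})

/-- Neural network distance w.r.t. a class `F` of discriminators:
`d_F(P, Q) = sup_{f ∈ F} (E_P[f] − E_Q[f])`. -/
noncomputable def nnDist {X : Type*} {k : ℕ} (F : Set (X × Fin k → ℝ))
    (P Q : X × Fin k → ℝ) : ℝ :=
  sSup ((fun f => (∑' z, P z * f z) - ∑' z, Q z * f z) '' F)

/-!
Since `P̃ = P C`, the expectation of `f` under `P̃` is that of `C ∘ f` under `P`. The confusion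
matrix is row-stochastic, so `‖C‖_∞ = 1` and Assumption 1 gives `C ∘ F ⊆ F`: every value of the
supremum defining `d_F(P̃, Q̃)` is already a value for `d_F(P, Q)`.

It remains to rule out that `d_F(P, Q)` is an unbounded supremum (Lean reads it as `0`) while
`d_F(P̃, Q̃)` is not. The full-rank condition makes `C` invertible, and `T = ‖C⁻¹‖⁻¹ C⁻¹` again
has `‖T‖_∞ = 1` and constant row sums in `(0, 1]`, so `T ∘ F ⊆ F`; as `C T = ‖C⁻¹‖⁻¹ I`, each
value for `(P, Q)` is `‖C⁻¹‖` times a value for `(P̃, Q̃)`.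
-/

open Matrix

theorem Real.sSup_le_sSup_of_subset {A B : Set ℝ} (hAB : A ⊆ B)
    (hne : B.Nonempty → A.Nonempty) (hbdd : BddAbove A → BddAbove B) : sSup A ≤ sSup B := by
  rcases B.eq_empty_or_nonempty with rfl | hB
  · rw [Set.subset_empty_iff.1 hAB]
  by_cases hBb : BddAbove B
  · exact csSup_le_csSup hBb (hne hB) hAB
  · rw [Real.sSup_of_not_bddAbove hBb, Real.sSup_of_not_bddAbove (mt hbdd hBb)]

section ChannelOperator

variable {X : Type*} {k : ℕ}

theorem chanOp_mul (A B : Matrix (Fin k) (Fin k) ℝ) (f : X × Fin k → ℝ) :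
    chanOp A (chanOp B f) = chanOp (A * B) f := by
  funext z
  simp only [chanOp, mul_apply, Finset.mul_sum, Finset.sum_mul, mul_assoc]
  exact Finset.sum_comm

theorem chanOp_smul_one (r : ℝ) (f : X × Fin k → ℝ) :
    chanOp (r • (1 : Matrix (Fin k) (Fin k) ℝ)) f = r • f := by
  funext z
  simp [chanOp, one_apply]

theorem Assumption1.chanOp_mem {F : Set (X × Fin k → ℝ)} (hF : Assumption1 F)
    {T : Matrix (Fin k) (Fin k) ℝ} (hT : matInfNorm T = 1) {r : ℝ} (hr0 : 0 ≤ r) (hr1 : r ≤ 1)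
    (hrow : ∀ i, ∑ j, T i j = r) {f : X × Fin k → ℝ} (hf : f ∈ F) : chanOp T f ∈ F := by
  obtain ⟨F1, F2, rfl, hF1, F2', rfl⟩ := hF
  obtain ⟨f1, hf1, -, ⟨g, hg, a, ha0, ha1, rfl⟩, c, rfl⟩ := hf
  refine ⟨chanOp T f1, hF1 T hT f1 hf1, _,
    ⟨g, hg, r * a, mul_nonneg hr0 ha0, mul_le_one₀ hr1 ha0 ha1, rfl⟩, r * c, ?_⟩
  funext z
  simp only [chanOp, Pi.add_apply, Function.const_apply, mul_add, Finset.sum_add_distrib,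
    ← Finset.sum_mul, hrow]
  ring

end ChannelOperator

section InfNorm

variable {k : ℕ}

theorem matInfNorm_smul (c : ℝ) (T : Matrix (Fin k) (Fin k) ℝ) :
    matInfNorm (c • T) = |c| * matInfNorm T := by
  simp only [matInfNorm, Matrix.smul_apply, smul_eq_mul, abs_mul, ← Finset.mul_sum,
    Real.mul_iSup_of_nonneg (abs_nonneg c)]

theorem matInfNorm_eq_one_of_nonneg [Nonempty (Fin k)] {T : Matrix (Fin k) (Fin k) ℝ}
    (hT : ∀ i j, 0 ≤ T i j) (hrow : ∀ i, ∑ j, T i j = 1) : matInfNorm T = 1 := by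
  simp [matInfNorm, abs_of_nonneg (hT _ _), hrow]

theorem one_le_matInfNorm [Nonempty (Fin k)] {T : Matrix (Fin k) (Fin k) ℝ}
    (hrow : ∀ i, ∑ j, T i j = 1) : 1 ≤ matInfNorm T := by
  let i : Fin k := Classical.arbitrary _
  calc 1 = |∑ j, T i j| := by rw [hrow, abs_one]
    _ ≤ ∑ j, |T i j| := Finset.abs_sum_le_sum_abs _ _
    _ ≤ matInfNorm T := le_ciSup (f := fun i => ∑ j, |T i j|) (Set.finite_range _).bddAbove i

theorem exists_mul_eq_smul_one_of_isUnit [Nonempty (Fin k)] {C : Matrix (Fin k) (Fin k) ℝ}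
    (hC : IsUnit C) (hrow : ∀ i, ∑ j, C i j = 1) :
    ∃ r : ℝ, 0 < r ∧ r ≤ 1 ∧ ∃ T : Matrix (Fin k) (Fin k) ℝ,
      matInfNorm T = 1 ∧ (∀ i, ∑ j, T i j = r) ∧ C * T = r • 1 := by
  have hdet : IsUnit C.det := (isUnit_iff_isUnit_det C).mp hC
  have hrow_inv : ∀ i, ∑ j, C⁻¹ i j = 1 := by
    have hC1 : C *ᵥ 1 = 1 := funext fun i => by simp [mulVec, dotProduct, hrow]
    have hCinv1 : C⁻¹ *ᵥ 1 = 1 := by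
      calc C⁻¹ *ᵥ 1 = C⁻¹ *ᵥ (C *ᵥ 1) := by rw [hC1]
        _ = 1 := by rw [mulVec_mulVec, nonsing_inv_mul C hdet, one_mulVec]
    intro i
    simpa [mulVec, dotProduct] using congrFun hCinv1 i
  have ht : 1 ≤ matInfNorm C⁻¹ := one_le_matInfNorm hrow_inv
  have ht0 : 0 < matInfNorm C⁻¹ := one_pos.trans_le ht
  refine ⟨(matInfNorm C⁻¹)⁻¹, inv_pos.2 ht0, inv_le_one_of_one_le₀ ht,
    (matInfNorm C⁻¹)⁻¹ • C⁻¹, ?_, fun i => ?_, ?_⟩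
  · rw [matInfNorm_smul, abs_of_pos (inv_pos.2 ht0), inv_mul_cancel₀ ht0.ne']
  · simp [← Finset.mul_sum, hrow_inv]
  · rw [Matrix.mul_smul, mul_nonsing_inv C hdet]

end InfNorm

section Expectation

variable {X : Type*} {k : ℕ}

theorem summable_mul_of_abs_le {ι : Type*} {p f : ι → ℝ} (hp : Summable p) {B : ℝ}
    (hf : ∀ i, |f i| ≤ B) : Summable fun i => p i * f i :=
  .of_norm_bounded (hp.abs.mul_right B) fun i => by
    rw [Real.norm_eq_abs, abs_mul]
    exact mul_le_mul_of_nonneg_left (hf i) (abs_nonneg _)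

theorem summable_prod_of_summable_right {ι : Type*} [Finite ι] {G : X × ι → ℝ}
    (hG : ∀ i, Summable fun x => G (x, i)) : Summable G := by
  rw [← summable_abs_iff, ← (Equiv.prodComm ι X).summable_iff]
  exact (summable_prod_of_nonneg fun _ => abs_nonneg _).2 ⟨fun i => (hG i).abs, .of_finite⟩

theorem tsum_prod_eq_tsum_sum {ι : Type*} [Fintype ι] {G : X × ι → ℝ}
    (hG : ∀ i, Summable fun x => G (x, i)) : ∑' z, G z = ∑' x, ∑ i, G (x, i) := by
  rw [(summable_prod_of_summable_right hG).tsum_prod]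
  simp_rw [tsum_fintype]

theorem tsum_corrupt_mul {P : X × Fin k → ℝ} (hP : Summable P) (C : Matrix (Fin k) (Fin k) ℝ)
    {f : X × Fin k → ℝ} {B : ℝ} (hf : ∀ z, |f z| ≤ B) :
    ∑' z, corrupt P C z * f z = ∑' z, P z * chanOp C f z := by
  have hterm : ∀ j y, Summable fun x => P (x, j) * (C j y * f (x, y)) := fun j y =>
    summable_mul_of_abs_le (hP.comp_injective (Prod.mk_left_injective j)) (B := |C j y| * B)
      fun x => by rw [abs_mul]; exact mul_le_mul_of_nonneg_left (hf _) (abs_nonneg _)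
  rw [tsum_prod_eq_tsum_sum fun y => ?_, tsum_prod_eq_tsum_sum fun j => ?_]
  · refine tsum_congr fun x => ?_
    simp only [corrupt, chanOp, Finset.sum_mul, Finset.mul_sum, mul_assoc]
    exact Finset.sum_comm
  · simp only [chanOp, Finset.mul_sum]
    exact summable_sum fun y _ => hterm j y
  · simp only [corrupt, Finset.sum_mul, mul_assoc]
    exact summable_sum fun j _ => hterm j y

noncomputable def meanDiff {Z : Type*} (P Q f : Z → ℝ) : ℝ :=
  (∑' z, P z * f z) - ∑' z, Q z * f z

theorem nnDist_eq_sSup_meanDiff (F : Set (X × Fin k → ℝ)) (P Q : X × Fin k → ℝ) :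
    nnDist F P Q = sSup (meanDiff P Q '' F) :=
  rfl

theorem meanDiff_smul {Z : Type*} (P Q f : Z → ℝ) (c : ℝ) :
    meanDiff P Q (c • f) = c * meanDiff P Q f := by
  simp only [meanDiff, Pi.smul_apply, smul_eq_mul, mul_left_comm _ c, tsum_mul_left, mul_sub]

theorem meanDiff_corrupt {P Q : X × Fin k → ℝ} (hP : Summable P) (hQ : Summable Q)
    (C : Matrix (Fin k) (Fin k) ℝ) {f : X × Fin k → ℝ} {B : ℝ} (hf : ∀ z, |f z| ≤ B) :
    meanDiff (corrupt P C) (corrupt Q C) f = meanDiff P Q (chanOp C f) := by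
  rw [meanDiff, meanDiff, tsum_corrupt_mul hP C hf, tsum_corrupt_mul hQ C hf]

end Expectation

section Confusion

variable {m mt : ℕ} (α : Fin mt → Fin (m + mt) → ℝ)

theorem confusion_apply (i j : Fin (m + mt)) :
    confusion m mt α i j =
      (if i = j then 1 - ∑ u, α u i else 0) + ∑ u, if j = Fin.natAdd m u then α u i else 0 := by
  simp [confusion, diagonal_apply, Matrix.sum_apply, vecMulVec_apply, Pi.single_apply]

theorem confusion_mulVec (v : Fin (m + mt) → ℝ) :
    confusion m mt α *ᵥ v =
      fun i => (1 - ∑ u, α u i) * v i + ∑ u, α u i * v (Fin.natAdd m u) := by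
  ext i
  simp [confusion, add_mulVec, sum_mulVec, mulVec_diagonal, vecMulVec_mulVec, single_dotProduct,
    mul_comm]

theorem confusion_row_sum (i : Fin (m + mt)) : ∑ j, confusion m mt α i j = 1 := by
  simpa [mulVec, dotProduct] using congrFun (confusion_mulVec α 1) i

theorem confusion_nonneg (hα0 : ∀ u i, 0 ≤ α u i) (hle : ∀ i, ∑ u, α u i ≤ 1)
    (i j : Fin (m + mt)) : 0 ≤ confusion m mt α i j := by
  rw [confusion_apply]
  refine add_nonneg ?_ (Finset.sum_nonneg fun u _ => ?_)
  · split_ifs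
    exacts [sub_nonneg.2 (hle i), le_rfl]
  · split_ifs
    exacts [hα0 u i, le_rfl]

/-- Rows of uncertain labels are unit vectors, so `C v = 0` forces `v = 0` first on the
uncertain labels and then, by the positive diagonal, everywhere. -/
theorem isUnit_confusion (hαu : ∀ (u : Fin mt) (i : Fin (m + mt)), m ≤ (i : ℕ) → α u i = 0)
    (hlt : ∀ i, ∑ u, α u i < 1) : IsUnit (confusion m mt α) := by
  rw [← mulVec_injective_iff_isUnit]
  intro v w hvw
  have h0 := congrFun (confusion_mulVec α (v - w))
  rw [mulVec_sub, hvw, sub_self] at h0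
  have hunc : ∀ u, (v - w) (Fin.natAdd m u) = 0 := fun u => by
    simpa [hαu _ (Fin.natAdd m u) (by simp)] using (h0 (Fin.natAdd m u)).symm
  refine sub_eq_zero.1 (funext fun i => ?_)
  have hi := (h0 i).symm
  simp only [hunc, mul_zero, Finset.sum_const_zero, add_zero] at hi
  exact (mul_eq_zero.1 hi).resolve_left (sub_pos.2 (hlt i)).ne'

end Confusion

theorem nnDist_corrupted_le_nnDist_original_general {X : Type*} {m mt : ℕ} (hmt : 0 < mt)
    (α : Fin mt → Fin (m + mt) → ℝ)
    (hα0 : ∀ u i, 0 ≤ α u i)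
    (hαu : ∀ (u : Fin mt) (i : Fin (m + mt)), m ≤ (i : ℕ) → α u i = 0)
    (hfull : ∀ i : Fin (m + mt), (i : ℕ) < m → ∑ u, α u i < 1)
    (P Q : X × Fin (m + mt) → ℝ) (hP : IsPMF P) (hQ : IsPMF Q)
    (F : Set (X × Fin (m + mt) → ℝ))
    (hFbd : ∀ f ∈ F, ∃ B : ℝ, ∀ z, |f z| ≤ B)
    (hF : Assumption1 F) :
    nnDist F (corrupt P (confusion m mt α)) (corrupt Q (confusion m mt α)) ≤ nnDist F P Q := by
  have : Nonempty (Fin (m + mt)) := ⟨Fin.natAdd m ⟨0, hmt⟩⟩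
  have hlt : ∀ i : Fin (m + mt), ∑ u, α u i < 1 := fun i => by
    rcases lt_or_ge (i : ℕ) m with hi | hi
    · exact hfull i hi
    · simp [hαu _ i hi]
  set C := confusion m mt α
  have hCrow : ∀ i, ∑ j, C i j = 1 := confusion_row_sum α
  have hCF : ∀ f ∈ F, chanOp C f ∈ F := fun f hf =>
    hF.chanOp_mem (matInfNorm_eq_one_of_nonneg (confusion_nonneg α hα0 fun i => (hlt i).le) hCrow)
      zero_le_one le_rfl hCrow hf
  obtain ⟨r, hr0, hr1, T, hT, hTrow, hCT⟩ :=
    exists_mul_eq_smul_one_of_isUnit (isUnit_confusion α hαu hlt) hCrow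
  have hdiff : ∀ f ∈ F, meanDiff (corrupt P C) (corrupt Q C) f = meanDiff P Q (chanOp C f) :=
    fun f hf => (hFbd f hf).elim fun _ hB => meanDiff_corrupt hP.2.1 hQ.2.1 C hB
  rw [nnDist_eq_sSup_meanDiff, nnDist_eq_sSup_meanDiff]
  refine Real.sSup_le_sSup_of_subset ?_ (fun hne => hne.of_image.image _) ?_
  · rintro _ ⟨f, hf, rfl⟩
    exact ⟨chanOp C f, hCF f hf, (hdiff f hf).symm⟩
  · rintro ⟨b, hb⟩
    refine ⟨r⁻¹ * b, ?_⟩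
    rintro _ ⟨f, hf, rfl⟩
    have hTf := hF.chanOp_mem hT hr0.le hr1 hTrow hf
    have hscaled : r * meanDiff P Q f ≤ b := by
      have := hb ⟨_, hTf, rfl⟩
      rwa [hdiff _ hTf, chanOp_mul, hCT, chanOp_smul_one, meanDiff_smul] at this
    rwa [le_inv_mul_iff₀ hr0]

theorem nnDist_corrupted_le_nnDist_original {X : Type*} [Countable X] {m mt : ℕ} (hm : 0 < m) (hmt : 0 < mt)
    (α : Fin mt → Fin (m + mt) → ℝ)
    (hα0 : ∀ u i, 0 ≤ α u i) (hα1 : ∀ u i, α u i ≤ 1)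
    (hαu : ∀ (u : Fin mt) (i : Fin (m + mt)), m ≤ (i : ℕ) → α u i = 0)
    (hfull : ∀ i : Fin (m + mt), (i : ℕ) < m → ∑ u, α u i < 1)
    (P Q : X × Fin (m + mt) → ℝ) (hP : IsPMF P) (hQ : IsPMF Q)
    (hPz : ∀ (x : X) (y : Fin (m + mt)), m ≤ (y : ℕ) → P (x, y) = 0)
    (hQz : ∀ (x : X) (y : Fin (m + mt)), m ≤ (y : ℕ) → Q (x, y) = 0)
    (F : Set (X × Fin (m + mt) → ℝ))
    (hFbd : ∀ f ∈ F, ∃ B : ℝ, ∀ z, |f z| ≤ B)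
    (hF : Assumption1 F) :
    nnDist F (corrupt P (confusion m mt α)) (corrupt Q (confusion m mt α)) ≤ nnDist F P Q :=
  nnDist_corrupted_le_nnDist_original_general hmt α hα0 hαu hfull P Q hP hQ F hFbd hF
end

section
/- In the complementary-labels model with corruption probability α ∈ [0,1), letting κ_α = (m−1)/(α + (1−α)(m−1)), the Jensen–Shannon divergence satisfies d_JS(P, Q) ≤ κ_α · √(8 · d_JS(P̃, Q̃)). (Corollary 2, eq. (15).) -/
open scoped BigOperators
open MeasureTheory

/-- Kullback–Leibler divergence of probability mass functions. -/
noncomputable def klDiv {Z : Type*} (P M : Z → ℝ) : ℝ :=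
  ∑' z, P z * Real.log (P z / M z)

/-- Jensen–Shannon divergence of probability mass functions. -/
noncomputable def jsDiv {Z : Type*} (P Q : Z → ℝ) : ℝ :=
  (1 / 2) * klDiv P (fun z => (P z + Q z) / 2) +
    (1 / 2) * klDiv Q (fun z => (P z + Q z) / 2)

/-- Parameter vector of the complementary label `u_y = m + y`: mass `a/(m−1)` on every
class label other than `y`, zero elsewhere. -/
noncomputable def compAlpha (m : ℕ) (a : ℝ) (y : Fin m) : Fin (m + m) → ℝ :=
  fun j => if (j : ℕ) < m ∧ (j : ℕ) ≠ (y : ℕ) then a / ((m : ℝ) - 1) else 0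

/-- Confusion matrix of the complementary-labels model:
`C = diag(𝟙 − Σ_y α_{u_y}) + Σ_y α_{u_y} e_{m+y}^T`. -/
noncomputable def compConfusion (m : ℕ) (a : ℝ) :
    Matrix (Fin (m + m)) (Fin (m + m)) ℝ :=
  Matrix.diagonal (fun i => 1 - ∑ y : Fin m, compAlpha m a y i) +
    ∑ y : Fin m, Matrix.vecMulVec (compAlpha m a y) (Pi.single (Fin.natAdd m y) 1)

/-!
On each fibre `x`, write `d y = P (x, y) - Q (x, y)` for the class labels `y`. The channel
sends `d` to `(1 - α) d y` on class labels and to `α / (m - 1) * (∑ j, d j - d y)` on the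
complementary labels, and the elementary inequality `∑ |d y| ≤ 2 ∑ |∑ j, d j - d y|` (for
`m ≥ 2`) gives `‖P - Q‖₁ ≤ 2 κ_α ‖P̃ - Q̃‖₁`. The bound then follows from the two standard
comparisons of `d_JS` with the `ℓ¹` distance: `d_JS(P, Q) ≤ ½ ‖P - Q‖₁`, from `log t ≤ t - 1`,
and `‖P̃ - Q̃‖₁ ≤ √(8 d_JS(P̃, Q̃))`, from
`u² ≤ (1 + u) log (1 + u) + (1 - u) log (1 - u)` on `[-1, 1]` with `u = (p - q) / (p + q)`,
followed by Cauchy–Schwarz against the weights `p + q`, of total mass `2`.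
-/

open Real Finset

lemma mul_log_div_midpoint_le {p q : ℝ} (hp : 0 ≤ p) (hq : 0 ≤ q) :
    p * log (p / ((p + q) / 2)) ≤ p * (p - q) / (p + q) := by
  rcases hp.eq_or_lt with rfl | hp
  · simp
  have hpq : 0 < p + q := by linarith
  calc p * log (p / ((p + q) / 2)) ≤ p * (p / ((p + q) / 2) - 1) :=
        mul_le_mul_of_nonneg_left (log_le_sub_one_of_pos (by positivity)) hp.le
    _ = p * (p - q) / (p + q) := by field_simp; ring

lemma abs_mul_log_div_midpoint_le {p q : ℝ} (hp : 0 ≤ p) (hq : 0 ≤ q) :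
    |p * log (p / ((p + q) / 2))| ≤ p + q := by
  rcases hp.eq_or_lt with rfl | hp
  · simpa using hq
  have hpq : 0 < p + q := by linarith
  have hlower : p * (1 - (p / ((p + q) / 2))⁻¹) ≤ p * log (p / ((p + q) / 2)) :=
    mul_le_mul_of_nonneg_left (one_sub_inv_le_log_of_pos (by positivity)) hp.le
  have hupper : p * (p - q) / (p + q) ≤ p + q := by
    rw [div_le_iff₀ hpq]; nlinarith
  have hlower_eq : p * (1 - (p / ((p + q) / 2))⁻¹) = (p - q) / 2 := by
    field_simp; ring
  rw [abs_le]
  constructor <;> linarith [mul_log_div_midpoint_le hp.le hq]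

lemma sq_sub_div_add_le_abs_sub {p q : ℝ} (hp : 0 ≤ p) (hq : 0 ≤ q) :
    (p - q) ^ 2 / (p + q) ≤ |p - q| := by
  refine div_le_of_le_mul₀ (by positivity) (abs_nonneg _) ?_
  have h : |p - q| ≤ p + q := abs_sub_le_iff.2 ⟨by linarith, by linarith⟩
  rw [← sq_abs, sq]
  exact mul_le_mul_of_nonneg_left h (abs_nonneg _)

noncomputable def jsKernel (p q : ℝ) : ℝ :=
  p * log (p / ((p + q) / 2)) + q * log (q / ((p + q) / 2))

lemma jsKernel_le_abs_sub {p q : ℝ} (hp : 0 ≤ p) (hq : 0 ≤ q) : jsKernel p q ≤ |p - q| := by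
  have hp' := mul_log_div_midpoint_le hp hq
  have hq' := mul_log_div_midpoint_le hq hp
  rw [add_comm q p] at hq'
  have : p * (p - q) / (p + q) + q * (q - p) / (p + q) = (p - q) ^ 2 / (p + q) := by ring
  unfold jsKernel
  linarith [sq_sub_div_add_le_abs_sub hp hq]

open Set in
lemma sq_le_mul_log_add_mul_log_of_nonneg {u : ℝ} (h0 : 0 ≤ u) (h1 : u ≤ 1) :
    u ^ 2 ≤ (1 + u) * log (1 + u) + (1 - u) * log (1 - u) := by
  let ψ : ℝ → ℝ := fun t => (1 + t) * log (1 + t) + (1 - t) * log (1 - t) - t ^ 2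
  have hderiv : ∀ t ∈ Ioo (0 : ℝ) 1,
      HasDerivAt ψ (log (1 + t) - log (1 - t) - 2 * t) t := by
    rintro t ⟨ht0, ht1⟩
    have hplus := (hasDerivAt_mul_log (x := 1 + t) (by linarith)).comp t
      ((hasDerivAt_id t).const_add 1)
    have hminus := (hasDerivAt_mul_log (x := 1 - t) (by linarith)).comp t
      ((hasDerivAt_id t).const_sub 1)
    refine ((hplus.add hminus).sub (hasDerivAt_pow 2 t)).congr_deriv ?_
    norm_num
    ring
  have hmono : MonotoneOn ψ (Icc 0 1) := by
    refine monotoneOn_of_deriv_nonneg (convex_Icc 0 1) ?_ ?_ ?_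
    · have := continuous_mul_log
      fun_prop
    · rw [interior_Icc]
      exact fun t ht => (hderiv t ht).differentiableAt.differentiableWithinAt
    · rw [interior_Icc]
      rintro t ⟨ht0, ht1⟩
      -- the first term of the series of `artanh t = ½ log ((1 + t) / (1 - t))`
      have hseries := sum_range_le_log_div ht0.le ht1 1
      rw [log_div (by linarith) (by linarith)] at hseries
      rw [(hderiv t ⟨ht0, ht1⟩).deriv]
      simp only [Finset.range_one, sum_singleton, pow_one, CharP.cast_eq_zero, mul_zero, zero_add,
        div_one] at hseries
      linarith
  have hψ0 : ψ 0 = 0 := by simp [ψ]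
  have hψ := hmono ⟨le_rfl, zero_le_one⟩ ⟨h0, h1⟩ h0
  rw [hψ0] at hψ
  exact sub_nonneg.1 hψ

lemma sq_le_mul_log_add_mul_log {u : ℝ} (hu : |u| ≤ 1) :
    u ^ 2 ≤ (1 + u) * log (1 + u) + (1 - u) * log (1 - u) := by
  rcases le_total 0 u with h | h
  · exact sq_le_mul_log_add_mul_log_of_nonneg h (by linarith [le_abs_self u])
  · have := sq_le_mul_log_add_mul_log_of_nonneg (u := -u) (by linarith)
      (by linarith [neg_le_abs u])
    rw [neg_sq, sub_neg_eq_add, ← sub_eq_add_neg] at this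
    linarith

lemma sq_sub_div_add_le_two_mul_jsKernel {p q : ℝ} (hp : 0 ≤ p) (hq : 0 ≤ q) :
    (p - q) ^ 2 / (p + q) ≤ 2 * jsKernel p q := by
  rcases (add_nonneg hp hq).eq_or_lt with hpq | hpq
  · obtain ⟨rfl, rfl⟩ : p = 0 ∧ q = 0 := ⟨by linarith, by linarith⟩
    simp [jsKernel]
  set u := (p - q) / (p + q) with hu_def
  have hu : |u| ≤ 1 := by
    rw [abs_div, abs_of_pos hpq, div_le_one hpq]
    exact abs_sub_le_iff.2 ⟨by linarith, by linarith⟩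
  have hplus : (p + q) * (1 + u) = 2 * p := by rw [hu_def]; field_simp; ring
  have hminus : (p + q) * (1 - u) = 2 * q := by rw [hu_def]; field_simp; ring
  have hkernel : 2 * jsKernel p q =
      (p + q) * ((1 + u) * log (1 + u) + (1 - u) * log (1 - u)) := by
    have hp' : p / ((p + q) / 2) = 1 + u := by
      rw [div_eq_iff (by positivity)]; linarith
    have hq' : q / ((p + q) / 2) = 1 - u := by
      rw [div_eq_iff (by positivity)]; linarith
    rw [jsKernel, hp', hq']
    linear_combination (-log (1 + u)) * hplus - log (1 - u) * hminus
  have hsq : (p - q) ^ 2 / (p + q) = (p + q) * u ^ 2 := by rw [hu_def]; field_simp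
  rw [hkernel, hsq]
  exact mul_le_mul_of_nonneg_left (sq_le_mul_log_add_mul_log hu) hpq.le

section Divergence
variable {Z : Type*} {P Q : Z → ℝ}

lemma summable_mul_log_div_midpoint (hP0 : 0 ≤ P) (hQ0 : 0 ≤ Q) (hPs : Summable P)
    (hQs : Summable Q) : Summable fun z => P z * log (P z / ((P z + Q z) / 2)) :=
  (hPs.add hQs).of_norm_bounded fun z => abs_mul_log_div_midpoint_le (hP0 z) (hQ0 z)

lemma summable_jsKernel (hP0 : 0 ≤ P) (hQ0 : 0 ≤ Q) (hPs : Summable P) (hQs : Summable Q) :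
    Summable fun z => jsKernel (P z) (Q z) := by
  have hQP := summable_mul_log_div_midpoint hQ0 hP0 hQs hPs
  simp only [add_comm (Q _)] at hQP
  exact (summable_mul_log_div_midpoint hP0 hQ0 hPs hQs).add hQP

lemma jsDiv_eq_tsum_jsKernel (hP0 : 0 ≤ P) (hQ0 : 0 ≤ Q) (hPs : Summable P)
    (hQs : Summable Q) : jsDiv P Q = (1 / 2) * ∑' z, jsKernel (P z) (Q z) := by
  have hQP := summable_mul_log_div_midpoint hQ0 hP0 hQs hPs
  simp only [add_comm (Q _)] at hQP
  rw [jsDiv, klDiv, klDiv, ← mul_add,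
    ← (summable_mul_log_div_midpoint hP0 hQ0 hPs hQs).tsum_add hQP]
  rfl

lemma jsDiv_le_half_tsum_abs_sub (hP0 : 0 ≤ P) (hQ0 : 0 ≤ Q) (hPs : Summable P)
    (hQs : Summable Q) : jsDiv P Q ≤ (1 / 2) * ∑' z, |P z - Q z| := by
  rw [jsDiv_eq_tsum_jsKernel hP0 hQ0 hPs hQs]
  exact mul_le_mul_of_nonneg_left ((summable_jsKernel hP0 hQ0 hPs hQs).tsum_le_tsum
    (fun z => jsKernel_le_abs_sub (hP0 z) (hQ0 z)) (hPs.sub hQs).abs) (by norm_num)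

lemma tsum_abs_sub_le_sqrt_jsDiv (hP : IsPMF P) (hQ : IsPMF Q) :
    ∑' z, |P z - Q z| ≤ √(8 * jsDiv P Q) := by
  obtain ⟨hP0, hPs, hP1⟩ := hP
  obtain ⟨hQ0, hQs, hQ1⟩ := hQ
  set G := ∑' z, (P z - Q z) ^ 2 / (P z + Q z)
  have hw : ∀ z, 0 ≤ (P z - Q z) ^ 2 / (P z + Q z) := fun z =>
    div_nonneg (sq_nonneg _) (add_nonneg (hP0 z) (hQ0 z))
  have hGs : Summable fun z => (P z - Q z) ^ 2 / (P z + Q z) :=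
    (hPs.sub hQs).abs.of_nonneg_of_le hw fun z => sq_sub_div_add_le_abs_sub (hP0 z) (hQ0 z)
  have hG : G ≤ 4 * jsDiv P Q := by
    rw [jsDiv_eq_tsum_jsKernel hP0 hQ0 hPs hQs, ← mul_assoc, ← tsum_mul_left]
    exact hGs.tsum_le_tsum (fun z => by
      linarith [sq_sub_div_add_le_two_mul_jsKernel (hP0 z) (hQ0 z)])
      ((summable_jsKernel hP0 hQ0 hPs hQs).mul_left _)
  refine (hPs.sub hQs).abs.tsum_le_of_sum_le fun s => Real.le_sqrt_of_sq_le ?_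
  have hCS : (∑ z ∈ s, |P z - Q z|) ^ 2 ≤
      (∑ z ∈ s, (P z - Q z) ^ 2 / (P z + Q z)) * ∑ z ∈ s, (P z + Q z) := by
    refine sum_sq_le_sum_mul_sum_of_sq_le_mul s (fun z _ => hw z)
      (fun z _ => add_nonneg (hP0 z) (hQ0 z)) fun z _ => ?_
    rw [sq_abs, div_mul_eq_mul_div]
    rcases (add_nonneg (hP0 z) (hQ0 z)).eq_or_lt with h | h
    · obtain ⟨h0, h1⟩ : P z = 0 ∧ Q z = 0 :=
        ⟨by linarith [hP0 z, hQ0 z], by linarith [hP0 z, hQ0 z]⟩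
      simp [h0, h1]
    · rw [mul_div_cancel_right₀ _ h.ne']
  have hsG : ∑ z ∈ s, (P z - Q z) ^ 2 / (P z + Q z) ≤ G :=
    hGs.sum_le_tsum s fun z _ => hw z
  have hs2 : ∑ z ∈ s, (P z + Q z) ≤ 2 := by
    have := (hPs.add hQs).sum_le_tsum s fun z _ => add_nonneg (hP0 z) (hQ0 z)
    rwa [(hPs.tsum_add hQs), hP1, hQ1, one_add_one_eq_two] at this
  have hG0 : 0 ≤ G := tsum_nonneg hw
  nlinarith [mul_le_mul hsG hs2 (sum_nonneg fun z _ => add_nonneg (hP0 z) (hQ0 z)) hG0]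

end Divergence

lemma sum_abs_le_two_mul_sum_abs_sum_sub_of_nonneg {ι : Type*} [Fintype ι]
    (hι : 1 < Fintype.card ι) (d : ι → ℝ) (hS : 0 ≤ ∑ j, d j) :
    ∑ i, |d i| ≤ 2 * ∑ i, |(∑ j, d j) - d i| := by
  classical
  set S := ∑ j, d j
  have hsum : ∑ i, (S - d i) = (Fintype.card ι - 1) * S := by
    rw [sum_sub_distrib, sum_const, card_univ, nsmul_eq_mul]; ring
  have hcard : (1 : ℝ) ≤ Fintype.card ι - 1 := by
    have : (2 : ℝ) ≤ Fintype.card ι := by exact_mod_cast hι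
    linarith
  by_cases hneg : ∃ i₀, d i₀ < 0
  · obtain ⟨i₀, hi₀⟩ := hneg
    have habs : ∑ i, |d i| = S + 2 * ∑ i, max (-d i) 0 := by
      rw [mul_sum, ← sum_add_distrib]
      refine sum_congr rfl fun i _ => ?_
      rcases le_total 0 (d i) with h | h
      · rw [abs_of_nonneg h, max_eq_right (by linarith)]; ring
      · rw [abs_of_nonpos h, max_eq_left (by linarith)]; ring
    have hle : ∀ i, max (-d i) 0 ≤ |S - d i| := fun i =>
      max_le (by linarith [le_abs_self (S - d i)]) (abs_nonneg _)
    have hi₀' : S + max (-d i₀) 0 ≤ |S - d i₀| := by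
      rw [max_eq_left (by linarith)]; linarith [le_abs_self (S - d i₀)]
    have hrest := sum_le_sum fun i (_ : i ∈ univ.erase i₀) => hle i
    have hsplit := add_sum_erase univ (fun i => max (-d i) 0) (mem_univ i₀)
    have hsplit' := add_sum_erase univ (fun i => |S - d i|) (mem_univ i₀)
    linarith
  · simp only [not_exists, not_lt] at hneg
    have habs : ∑ i, |d i| = S := sum_congr rfl fun i _ => abs_of_nonneg (hneg i)
    have := abs_sum_le_sum_abs (fun i => S - d i) univ
    rw [hsum, abs_of_nonneg (by positivity)] at this
    nlinarith

lemma sum_abs_le_two_mul_sum_abs_sum_sub {ι : Type*} [Fintype ι] (hι : 1 < Fintype.card ι)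
    (d : ι → ℝ) : ∑ i, |d i| ≤ 2 * ∑ i, |(∑ j, d j) - d i| := by
  rcases le_total 0 (∑ j, d j) with hS | hS
  · exact sum_abs_le_two_mul_sum_abs_sum_sub_of_nonneg hι d hS
  · have := sum_abs_le_two_mul_sum_abs_sum_sub_of_nonneg hι (-d) (by simpa using hS)
    simp only [Pi.neg_apply, abs_neg, sum_neg_distrib, neg_sub_neg] at this
    simpa only [abs_sub_comm] using this

section Corruption
variable {X : Type*}

lemma tsum_eq_tsum_sum_fiber {ι : Type*} [Fintype ι] {f : X × ι → ℝ} (hf : Summable f) :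
    ∑' z, f z = ∑' x, ∑ i, f (x, i) := by
  simp only [hf.tsum_prod' hf.prod_factor, tsum_fintype]

lemma summable_sum_fiber {ι : Type*} [Fintype ι] {f : X × ι → ℝ} (hf : Summable f) :
    Summable fun x => ∑ i, f (x, i) :=
  summable_sum fun i _ => hf.comp_injective (Prod.mk_left_injective i)

lemma sum_corrupt_fiber {k : ℕ} (P : X × Fin k → ℝ) {C : Matrix (Fin k) (Fin k) ℝ}
    (hC : ∀ i, ∑ j, C i j = 1) (x : X) : ∑ j, corrupt P C (x, j) = ∑ i, P (x, i) := by
  simp only [corrupt]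
  rw [sum_comm]
  simp only [← mul_sum, hC, mul_one]

lemma summable_corrupt {k : ℕ} {P : X × Fin k → ℝ} {C : Matrix (Fin k) (Fin k) ℝ}
    (hP0 : 0 ≤ P) (hPs : Summable P) (hC0 : ∀ i j, 0 ≤ C i j) (hC1 : ∀ i, ∑ j, C i j = 1) :
    Summable (corrupt P C) := by
  have h0 : 0 ≤ corrupt P C := fun z => sum_nonneg fun j _ => mul_nonneg (hP0 _) (hC0 _ _)
  refine (summable_prod_of_nonneg h0).2 ⟨fun _ => .of_finite, ?_⟩
  simp only [tsum_fintype, sum_corrupt_fiber P hC1]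
  exact summable_sum_fiber hPs

lemma isPMF_corrupt {k : ℕ} {P : X × Fin k → ℝ} {C : Matrix (Fin k) (Fin k) ℝ}
    (hP : IsPMF P) (hC0 : ∀ i j, 0 ≤ C i j) (hC1 : ∀ i, ∑ j, C i j = 1) : IsPMF (corrupt P C) := by
  obtain ⟨hP0, hPs, hP1⟩ := hP
  have hs := summable_corrupt hP0 hPs hC0 hC1
  refine ⟨fun z => sum_nonneg fun j _ => mul_nonneg (hP0 _) (hC0 _ _), hs, ?_⟩
  rw [tsum_eq_tsum_sum_fiber hs, ← hP1, tsum_eq_tsum_sum_fiber hPs]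
  simp only [sum_corrupt_fiber P hC1]

end Corruption

lemma Fin.castAdd_ne_natAdd {m : ℕ} (i j : Fin m) : Fin.castAdd m i ≠ Fin.natAdd m j := by
  simp only [ne_eq, Fin.ext_iff, Fin.val_castAdd, Fin.val_natAdd]
  omega

section Complementary
variable {m : ℕ} {a : ℝ}

lemma cast_sub_one_pos (hm : 2 ≤ m) : (0 : ℝ) < m - 1 := by
  have : (2 : ℝ) ≤ m := by exact_mod_cast hm
  linarith

lemma compAlpha_castAdd (y j : Fin m) :
    compAlpha m a y (Fin.castAdd m j) = if j = y then 0 else a / ((m : ℝ) - 1) := by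
  simp [compAlpha, Fin.val_inj, ite_not]

lemma compAlpha_natAdd (y j : Fin m) : compAlpha m a y (Fin.natAdd m j) = 0 := by
  simp [compAlpha]

lemma sum_compAlpha_castAdd (hm : 2 ≤ m) (j : Fin m) :
    ∑ y, compAlpha m a y (Fin.castAdd m j) = a := by
  have hm1 := (cast_sub_one_pos hm).ne'
  simp only [compAlpha_castAdd, sum_ite, sum_const_zero, filter_ne, sum_const, mem_univ,
    card_erase_of_mem, card_univ, Fintype.card_fin, nsmul_eq_mul, Nat.cast_sub (by omega : 1 ≤ m),
    Nat.cast_one, zero_add]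
  field_simp

lemma compConfusion_apply (i k : Fin (m + m)) :
    compConfusion m a i k = (if i = k then 1 - ∑ y, compAlpha m a y i else 0) +
      ∑ y, if k = Fin.natAdd m y then compAlpha m a y i else 0 := by
  simp only [compConfusion, Matrix.add_apply, Matrix.diagonal_apply, Matrix.sum_apply,
    Matrix.vecMulVec_apply, Pi.single_apply, mul_ite, mul_one, mul_zero]

lemma compConfusion_castAdd_castAdd (hm : 2 ≤ m) (j y : Fin m) :
    compConfusion m a (Fin.castAdd m j) (Fin.castAdd m y) = if j = y then 1 - a else 0 := by
  simp only [compConfusion_apply, Fin.castAdd_inj, sum_compAlpha_castAdd hm,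
    Fin.castAdd_ne_natAdd, if_false, sum_const_zero, add_zero]

lemma compConfusion_castAdd_natAdd (j y : Fin m) :
    compConfusion m a (Fin.castAdd m j) (Fin.natAdd m y) = compAlpha m a y (Fin.castAdd m j) := by
  simp only [compConfusion_apply, Fin.castAdd_ne_natAdd, Fin.natAdd_inj, if_false, zero_add,
    sum_ite_eq, mem_univ, if_true]

lemma compConfusion_natAdd_castAdd (j y : Fin m) :
    compConfusion m a (Fin.natAdd m j) (Fin.castAdd m y) = 0 := by
  simp only [compConfusion_apply, (Fin.castAdd_ne_natAdd _ _).symm, Fin.castAdd_ne_natAdd,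
    if_false, sum_const_zero, add_zero]

lemma compConfusion_natAdd_natAdd (j y : Fin m) :
    compConfusion m a (Fin.natAdd m j) (Fin.natAdd m y) = if j = y then 1 else 0 := by
  simp only [compConfusion_apply, Fin.natAdd_inj, compAlpha_natAdd, ite_self, sum_const_zero,
    sub_zero, add_zero]

lemma compConfusion_nonneg (ha0 : 0 ≤ a) (ha1 : a ≤ 1) (hm : 2 ≤ m) (i k : Fin (m + m)) :
    0 ≤ compConfusion m a i k := by
  have hc : 0 ≤ a / ((m : ℝ) - 1) := div_nonneg ha0 (cast_sub_one_pos hm).le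
  induction i using Fin.addCases with
  | left j =>
    induction k using Fin.addCases with
    | left y => rw [compConfusion_castAdd_castAdd hm]; split_ifs <;> linarith
    | right y => rw [compConfusion_castAdd_natAdd, compAlpha_castAdd]; split_ifs <;> linarith
  | right j =>
    induction k using Fin.addCases with
    | left y => rw [compConfusion_natAdd_castAdd]
    | right y => rw [compConfusion_natAdd_natAdd]; split_ifs <;> norm_num

lemma sum_compConfusion_row (hm : 2 ≤ m) (i : Fin (m + m)) :
    ∑ k, compConfusion m a i k = 1 := by
  rw [Fin.sum_univ_add]
  induction i using Fin.addCases with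
  | left j =>
    simp only [compConfusion_castAdd_castAdd hm, compConfusion_castAdd_natAdd,
      sum_compAlpha_castAdd hm, sum_ite_eq, mem_univ, if_true, sub_add_cancel]
  | right j =>
    simp only [compConfusion_natAdd_castAdd, compConfusion_natAdd_natAdd, sum_const_zero,
      sum_ite_eq, mem_univ, if_true, zero_add]

variable {X : Type*} {P : X × Fin (m + m) → ℝ}

lemma corrupt_apply_of_natAdd_eq_zero
    (hPz : ∀ x (y : Fin (m + m)), m ≤ (y : ℕ) → P (x, y) = 0)
    (C : Matrix (Fin (m + m)) (Fin (m + m)) ℝ) (x : X) (k : Fin (m + m)) :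
    corrupt P C (x, k) = ∑ j : Fin m, P (x, Fin.castAdd m j) * C (Fin.castAdd m j) k := by
  rw [corrupt, Fin.sum_univ_add, add_eq_left]
  exact sum_eq_zero fun j _ => by rw [hPz x _ (by simp), zero_mul]

lemma corrupt_compConfusion_castAdd (hm : 2 ≤ m)
    (hPz : ∀ x (y : Fin (m + m)), m ≤ (y : ℕ) → P (x, y) = 0) (x : X) (y : Fin m) :
    corrupt P (compConfusion m a) (x, Fin.castAdd m y) = (1 - a) * P (x, Fin.castAdd m y) := by
  simp only [corrupt_apply_of_natAdd_eq_zero hPz, compConfusion_castAdd_castAdd hm, mul_ite,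
    mul_zero, sum_ite_eq', mem_univ, if_true]
  ring

lemma corrupt_compConfusion_natAdd (hPz : ∀ x (y : Fin (m + m)), m ≤ (y : ℕ) → P (x, y) = 0)
    (x : X) (y : Fin m) :
    corrupt P (compConfusion m a) (x, Fin.natAdd m y) =
      a / ((m : ℝ) - 1) * ((∑ j, P (x, Fin.castAdd m j)) - P (x, Fin.castAdd m y)) := by
  have hterm : ∀ j, P (x, Fin.castAdd m j) * compAlpha m a y (Fin.castAdd m j) =
      a / ((m : ℝ) - 1) * P (x, Fin.castAdd m j) -
        if j = y then a / ((m : ℝ) - 1) * P (x, Fin.castAdd m j) else 0 := by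
    intro j
    rw [compAlpha_castAdd]
    split_ifs <;> ring
  simp only [corrupt_apply_of_natAdd_eq_zero hPz, compConfusion_castAdd_natAdd, hterm,
    sum_sub_distrib, sum_ite_eq', mem_univ, if_true, mul_sub, mul_sum]

variable {Q : X × Fin (m + m) → ℝ}

lemma sum_abs_sub_fiber_of_natAdd_eq_zero
    (hPz : ∀ x (y : Fin (m + m)), m ≤ (y : ℕ) → P (x, y) = 0)
    (hQz : ∀ x (y : Fin (m + m)), m ≤ (y : ℕ) → Q (x, y) = 0) (x : X) :
    ∑ k, |P (x, k) - Q (x, k)| =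
      ∑ y : Fin m, |P (x, Fin.castAdd m y) - Q (x, Fin.castAdd m y)| := by
  rw [Fin.sum_univ_add, add_eq_left]
  exact sum_eq_zero fun y _ => by
    rw [hPz x _ (by simp), hQz x _ (by simp), sub_zero, abs_zero]

lemma sum_abs_sub_fiber_le_sum_abs_sub_corrupt_compConfusion (hm : 2 ≤ m) (ha0 : 0 ≤ a)
    (ha1 : a ≤ 1) (hPz : ∀ x (y : Fin (m + m)), m ≤ (y : ℕ) → P (x, y) = 0)
    (hQz : ∀ x (y : Fin (m + m)), m ≤ (y : ℕ) → Q (x, y) = 0) (x : X) :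
    (a + (1 - a) * ((m : ℝ) - 1)) * ∑ k, |P (x, k) - Q (x, k)| ≤
      2 * ((m : ℝ) - 1) * ∑ k, |corrupt P (compConfusion m a) (x, k) -
        corrupt Q (compConfusion m a) (x, k)| := by
  have hm1 := cast_sub_one_pos hm
  set d : Fin m → ℝ := fun y => P (x, Fin.castAdd m y) - Q (x, Fin.castAdd m y)
  have hclass : ∀ y, |corrupt P (compConfusion m a) (x, Fin.castAdd m y) -
      corrupt Q (compConfusion m a) (x, Fin.castAdd m y)| = (1 - a) * |d y| := fun y => by
    rw [corrupt_compConfusion_castAdd hm hPz, corrupt_compConfusion_castAdd hm hQz, ← mul_sub,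
      abs_mul, abs_of_nonneg (by linarith)]
  have hcomp : ∀ y, |corrupt P (compConfusion m a) (x, Fin.natAdd m y) -
      corrupt Q (compConfusion m a) (x, Fin.natAdd m y)| =
        a / ((m : ℝ) - 1) * |(∑ j, d j) - d y| := fun y => by
    rw [corrupt_compConfusion_natAdd hPz, corrupt_compConfusion_natAdd hQz, ← mul_sub, abs_mul,
      abs_of_nonneg (div_nonneg ha0 hm1.le)]
    congr 2
    simp only [d, sum_sub_distrib]
    ring
  have hkey := sum_abs_le_two_mul_sum_abs_sum_sub (by rw [Fintype.card_fin]; omega) d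
  have hfiber : ∑ k, |P (x, k) - Q (x, k)| = ∑ y, |d y| :=
    sum_abs_sub_fiber_of_natAdd_eq_zero hPz hQz x
  rw [hfiber, Fin.sum_univ_add]
  simp only [hclass, hcomp, ← mul_sum]
  rw [mul_add, ← mul_assoc, ← mul_assoc,
    show 2 * ((m : ℝ) - 1) * (a / ((m : ℝ) - 1)) = 2 * a by field_simp]
  have : 0 ≤ ∑ y, |d y| := sum_nonneg fun y _ => abs_nonneg _
  nlinarith [mul_nonneg (sub_nonneg.2 ha1) hm1.le]

lemma tsum_abs_sub_le_tsum_abs_sub_corrupt_compConfusion (hm : 2 ≤ m) (ha0 : 0 ≤ a)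
    (ha1 : a ≤ 1) (hP0 : 0 ≤ P) (hQ0 : 0 ≤ Q) (hPs : Summable P) (hQs : Summable Q)
    (hPz : ∀ x (y : Fin (m + m)), m ≤ (y : ℕ) → P (x, y) = 0)
    (hQz : ∀ x (y : Fin (m + m)), m ≤ (y : ℕ) → Q (x, y) = 0) :
    (a + (1 - a) * ((m : ℝ) - 1)) * ∑' z, |P z - Q z| ≤
      2 * ((m : ℝ) - 1) * ∑' z, |corrupt P (compConfusion m a) z -
        corrupt Q (compConfusion m a) z| := by
  have hC0 := compConfusion_nonneg ha0 ha1 hm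
  have hC1 := sum_compConfusion_row (a := a) hm
  have hs : Summable fun z => |P z - Q z| := (hPs.sub hQs).abs
  have hs' : Summable fun z => |corrupt P (compConfusion m a) z -
      corrupt Q (compConfusion m a) z| :=
    ((summable_corrupt hP0 hPs hC0 hC1).sub (summable_corrupt hQ0 hQs hC0 hC1)).abs
  rw [tsum_eq_tsum_sum_fiber hs, tsum_eq_tsum_sum_fiber hs', ← tsum_mul_left, ← tsum_mul_left]
  exact ((summable_sum_fiber hs).mul_left _).tsum_le_tsum
    (sum_abs_sub_fiber_le_sum_abs_sub_corrupt_compConfusion hm ha0 ha1 hPz hQz)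
    ((summable_sum_fiber hs').mul_left _)

end Complementary

theorem comp_js_bound_general {X : Type*} {m : ℕ} (hm : 2 ≤ m) (a : ℝ)
    (ha0 : 0 ≤ a) (ha1 : a < 1)
    (P Q : X × Fin (m + m) → ℝ) (hP : IsPMF P) (hQ : IsPMF Q)
    (hPz : ∀ (x : X) (y : Fin (m + m)), m ≤ (y : ℕ) → P (x, y) = 0)
    (hQz : ∀ (x : X) (y : Fin (m + m)), m ≤ (y : ℕ) → Q (x, y) = 0) :
    jsDiv P Q ≤ (((m : ℝ) - 1) / (a + (1 - a) * ((m : ℝ) - 1))) *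
      Real.sqrt (8 * jsDiv (corrupt P (compConfusion m a)) (corrupt Q (compConfusion m a))) := by
  have hm1 := cast_sub_one_pos hm
  have hden : 0 < a + (1 - a) * ((m : ℝ) - 1) := by nlinarith
  have hC0 := compConfusion_nonneg ha0 ha1.le hm
  have hC1 := sum_compConfusion_row (a := a) hm
  have hL1 := tsum_abs_sub_le_tsum_abs_sub_corrupt_compConfusion hm ha0 ha1.le hP.1 hQ.1 hP.2.1
    hQ.2.1 hPz hQz
  calc jsDiv P Q ≤ (1 / 2) * ∑' z, |P z - Q z| :=
        jsDiv_le_half_tsum_abs_sub hP.1 hQ.1 hP.2.1 hQ.2.1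
    _ ≤ ((m : ℝ) - 1) / (a + (1 - a) * ((m : ℝ) - 1)) *
          ∑' z, |corrupt P (compConfusion m a) z - corrupt Q (compConfusion m a) z| := by
        rw [div_mul_eq_mul_div ((m : ℝ) - 1), le_div_iff₀ hden]
        linarith
    _ ≤ _ := mul_le_mul_of_nonneg_left
        (tsum_abs_sub_le_sqrt_jsDiv (isPMF_corrupt hP hC0 hC1) (isPMF_corrupt hQ hC0 hC1))
        (div_nonneg hm1.le hden.le)

theorem comp_js_bound {X : Type*} [Countable X] {m : ℕ} (hm : 2 ≤ m) (a : ℝ)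
    (ha0 : 0 ≤ a) (ha1 : a < 1)
    (P Q : X × Fin (m + m) → ℝ) (hP : IsPMF P) (hQ : IsPMF Q)
    (hPz : ∀ (x : X) (y : Fin (m + m)), m ≤ (y : ℕ) → P (x, y) = 0)
    (hQz : ∀ (x : X) (y : Fin (m + m)), m ≤ (y : ℕ) → Q (x, y) = 0) :
    jsDiv P Q ≤ (((m : ℝ) - 1) / (a + (1 - a) * ((m : ℝ) - 1))) *
      Real.sqrt (8 * jsDiv (corrupt P (compConfusion m a)) (corrupt Q (compConfusion m a))) :=
  comp_js_bound_general hm a ha0 ha1 P Q hP hQ hPz hQz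
end
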